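/- arXiv:2603.29335 — 5 statements merged into one kernel-verified Lean document; each statement's English description precedes it below -/
import Mathlib

section
/- Let G be a finite simple graph and let v be a non-isolated vertex of G with degree d(v). Then λ(G) ≤ sqrt(λ(G − v)² + 2·d(v) − 1), where λ denotes spectral radius of the adjacency matrix. -/
open Matrix

/-- The adjacency matrix of a simple graph, viewed over `ℝ`, is Hermitian. -/
lemma adjHerm {V : Type*} [Fintype V] (G : SimpleGraph V) [DecidableRel G.Adj] :
    (G.adjMatrix ℝ).IsHermitian := by
  rw [Matrix.IsHermitian, Matrix.conjTranspose_eq_transpose_of_trivial]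
  exact G.isSymm_adjMatrix

/-- The spectral radius of a finite simple graph: the maximum of the absolute
values of the eigenvalues of its adjacency matrix. -/
noncomputable def specRad {V : Type*} [Fintype V] [DecidableEq V]
    (G : SimpleGraph V) [DecidableRel G.Adj] : ℝ :=
  ⨆ i, |(adjHerm G).eigenvalues i|

instance {V : Type*} (G : SimpleGraph V) [DecidableRel G.Adj] (s : Set V)
    [DecidablePred (· ∈ s)] : DecidableRel (G.induce s).Adj :=
  fun a b => ‹DecidableRel G.Adj› a b

/-- The graph `G - v` obtained from `G` by deleting the vertex `v`
and all edges incident to it. -/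
abbrev deleteVertex {V : Type*} [DecidableEq V] (G : SimpleGraph V) (v : V) :
    SimpleGraph {u // u ≠ v} :=
  G.induce {u | u ≠ v}

/-!
Let `μ` be the largest eigenvalue of `A(G)`; comparing `x ⬝ A x` with `|x| ⬝ A |x|` shows that it
dominates every `|eigenvalue|`, so `μ = λ(G)`. Write `B = A(G - v)`, `ρ = λ(G - v)`, `d = d(v)` and
`a` for the indicator vector of the neighbourhood of `v` in `G - v`. If `μ > ρ`, an eigenvector `x`
of `μ` cannot vanish at `v` (its restriction would be an eigenvector of `B` for `μ`), so after
scaling `x v = 1` its restriction `y` satisfies `B y = μ y - a` and `a ⬝ y = μ`. The matrix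
`(ρ² - B²)(μ - B)` is a polynomial in `B` that is nonnegative on the spectrum of `B`, and
`y ⬝ (ρ² - B²)(μ - B) y ≥ 0` expands to `(μ² - ρ²) μ ≤ μ d + a ⬝ B a`. Finally
`a ⬝ B a ≤ (d - 1) μ`: by counting when `d ≤ μ`, and by the Rayleigh quotient of the closed
neighbourhood of `v` when `μ < d`.
-/

open Polynomial
open scoped MatrixOrder

section Spectral

variable {n : Type*} [Fintype n] {A : Matrix n n ℝ}

lemma Matrix.IsHermitian.dotProduct_mulVec_comm (hA : A.IsHermitian) (x y : n → ℝ) :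
    x ⬝ᵥ (A *ᵥ y) = (A *ᵥ x) ⬝ᵥ y := by
  rw [dotProduct_mulVec, ← mulVec_transpose, ← conjTranspose_eq_transpose_of_trivial, hA.eq]

lemma abs_dotProduct_mulVec_le_of_nonneg (hA0 : ∀ i j, 0 ≤ A i j) (x : n → ℝ) :
    |x ⬝ᵥ (A *ᵥ x)| ≤ |x| ⬝ᵥ (A *ᵥ |x|) := by
  simp only [dotProduct, mulVec, Pi.abs_apply]
  refine (Finset.abs_sum_le_sum_abs _ _).trans (Finset.sum_le_sum fun i _ => ?_)
  rw [abs_mul]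
  refine mul_le_mul_of_nonneg_left ((Finset.abs_sum_le_sum_abs _ _).trans_eq ?_) (abs_nonneg _)
  simp only [abs_mul, abs_of_nonneg (hA0 i _)]

variable [DecidableEq n]

lemma Matrix.IsHermitian.eigenvectorBasis_ne_zero (hA : A.IsHermitian) (i : n) :
    ⇑(hA.eigenvectorBasis i) ≠ 0 := by
  simpa using hA.eigenvectorBasis.orthonormal.ne_zero i

lemma Matrix.IsHermitian.exists_eigenvalues_eq_of_mulVec_eq_smul (hA : A.IsHermitian)
    {x : n → ℝ} {μ : ℝ} (hx : A *ᵥ x = μ • x) (hx0 : x ≠ 0) : ∃ i, hA.eigenvalues i = μ := by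
  have hμ : μ ∈ spectrum ℝ A := by
    rw [← spectrum_toLin']
    exact (Module.End.hasEigenvalue_of_hasEigenvector
      ⟨by simpa [Module.End.mem_eigenspace_iff] using hx, hx0⟩).mem_spectrum
  rwa [hA.spectrum_real_eq_range_eigenvalues] at hμ

lemma dotProduct_aeval_mulVec_nonneg (hA : A.IsHermitian) (p : ℝ[X])
    (hp : ∀ i, 0 ≤ p.eval (hA.eigenvalues i)) (z : n → ℝ) :
    0 ≤ z ⬝ᵥ (aeval A p *ᵥ z) := by
  have h : 0 ≤ cfc (fun t => p.eval t) A :=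
    cfc_nonneg fun t ht => by
      obtain ⟨i, rfl⟩ := hA.spectrum_real_eq_range_eigenvalues ▸ ht
      exact hp i
  rw [cfc_polynomial p A hA.isSelfAdjoint] at h
  simpa using h.posSemidef.dotProduct_mulVec_nonneg z

lemma dotProduct_mulVec_le_of_eigenvalues_le (hA : A.IsHermitian) {c : ℝ}
    (hc : ∀ i, hA.eigenvalues i ≤ c) (z : n → ℝ) :
    z ⬝ᵥ (A *ᵥ z) ≤ c * (z ⬝ᵥ z) := by
  have h := dotProduct_aeval_mulVec_nonneg hA (C c - X) (by simpa using hc) z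
  simpa [sub_mulVec, Algebra.algebraMap_eq_smul_one, smul_mulVec] using h

lemma abs_le_of_mulVec_eq_smul_of_nonneg (hA : A.IsHermitian) (hA0 : ∀ i j, 0 ≤ A i j)
    {c : ℝ} (hc : ∀ i, hA.eigenvalues i ≤ c) {x : n → ℝ} {μ : ℝ} (hx : A *ᵥ x = μ • x)
    (hx0 : x ≠ 0) : |μ| ≤ c := by
  have hxx : |x| ⬝ᵥ |x| = x ⬝ᵥ x := by simp [dotProduct, Pi.abs_apply, abs_mul_abs_self]
  have hpos : 0 < x ⬝ᵥ x :=
    (Finset.sum_nonneg fun i _ => mul_self_nonneg (x i)).lt_of_ne'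
      (dotProduct_self_eq_zero.not.mpr hx0)
  refine le_of_mul_le_mul_right ?_ hpos
  calc |μ| * (x ⬝ᵥ x) = |x ⬝ᵥ (A *ᵥ x)| := by
        rw [hx, dotProduct_smul, smul_eq_mul, abs_mul, abs_of_pos hpos]
    _ ≤ |x| ⬝ᵥ (A *ᵥ |x|) := abs_dotProduct_mulVec_le_of_nonneg hA0 x
    _ ≤ c * (x ⬝ᵥ x) := hxx ▸ dotProduct_mulVec_le_of_eigenvalues_le hA hc |x|

lemma sq_sub_sq_mul_dotProduct_le (hA : A.IsHermitian) {ρ μ : ℝ}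
    (hρ : ∀ i, |hA.eigenvalues i| ≤ ρ) (hρμ : ρ ≤ μ) {a y : n → ℝ}
    (hy : A *ᵥ y = μ • y - a) :
    (μ ^ 2 - ρ ^ 2) * (a ⬝ᵥ y) ≤ μ * (a ⬝ᵥ a) + a ⬝ᵥ (A *ᵥ a) := by
  have hp : ∀ i, 0 ≤ ((C (ρ ^ 2) - X ^ 2) * (C μ - X)).eval (hA.eigenvalues i) := fun i => by
    have := abs_le.mp (hρ i)
    simp only [eval_mul, eval_sub, eval_C, eval_pow, eval_X]
    exact mul_nonneg (by nlinarith) (by linarith)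
  have h := dotProduct_aeval_mulVec_nonneg hA _ hp y
  have hp_aeval : aeval A ((C (ρ ^ 2) - X ^ 2) * (C μ - X)) =
      (ρ ^ 2 • 1 - A * A) * (μ • 1 - A) := by
    simp [pow_two, Algebra.algebraMap_eq_smul_one, mul_smul]
  have hμy : (μ • 1 - A) *ᵥ y = a := by
    rw [sub_mulVec, hy, smul_mulVec, one_mulVec]; abel
  have hAAa : y ⬝ᵥ (A *ᵥ (A *ᵥ a)) = μ * (μ * (a ⬝ᵥ y) - a ⬝ᵥ a) - a ⬝ᵥ (A *ᵥ a) := by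
    rw [hA.dotProduct_mulVec_comm, hy, sub_dotProduct, smul_dotProduct,
      hA.dotProduct_mulVec_comm y, hy, sub_dotProduct, smul_dotProduct, dotProduct_comm y a,
      smul_eq_mul, smul_eq_mul]
  rw [hp_aeval, ← mulVec_mulVec, hμy, sub_mulVec, ← mulVec_mulVec, smul_mulVec, one_mulVec,
    dotProduct_sub, dotProduct_smul, hAAa, dotProduct_comm y a, smul_eq_mul] at h
  nlinarith

end Spectral

lemma SimpleGraph.adjMatrix_apply_nonneg {V : Type*} (G : SimpleGraph V) [DecidableRel G.Adj]
    (i j : V) : 0 ≤ G.adjMatrix ℝ i j := by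
  rw [adjMatrix_apply]; split <;> norm_num

lemma SimpleGraph.dotProduct_adjMatrix_mulVec_le {V : Type*} [Fintype V] (G : SimpleGraph V)
    [DecidableRel G.Adj] {a : V → ℝ} (ha : 0 ≤ a) :
    a ⬝ᵥ (G.adjMatrix ℝ *ᵥ a) ≤ (∑ w, a w) ^ 2 - a ⬝ᵥ a := by
  classical
  have hrow : ∀ u, (G.adjMatrix ℝ *ᵥ a) u ≤ ∑ w, a w - a u := fun u => by
    rw [G.adjMatrix_mulVec_apply, ← Finset.sum_erase_eq_sub (Finset.mem_univ u)]
    exact Finset.sum_le_sum_of_subset_of_nonneg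
      (fun w hw => Finset.mem_erase.mpr ⟨(G.ne_of_adj ((G.mem_neighborFinset u w).mp hw)).symm,
        Finset.mem_univ w⟩)
      (fun w _ _ => ha w)
  calc a ⬝ᵥ (G.adjMatrix ℝ *ᵥ a) ≤ ∑ u, a u * (∑ w, a w - a u) :=
        Finset.sum_le_sum fun u _ => mul_le_mul_of_nonneg_left (hrow u) (ha u)
    _ = (∑ w, a w) ^ 2 - a ⬝ᵥ a := by
        simp only [mul_sub, Finset.sum_sub_distrib, ← Finset.sum_mul, dotProduct, sq]

lemma abs_eigenvalues_le_specRad {V : Type*} [Fintype V] [DecidableEq V] (G : SimpleGraph V)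
    [DecidableRel G.Adj] (i : V) : |(adjHerm G).eigenvalues i| ≤ specRad G :=
  le_ciSup (Set.finite_range fun i => |(adjHerm G).eigenvalues i|).bddAbove i

lemma specRad_nonneg {V : Type*} [Fintype V] [DecidableEq V] (G : SimpleGraph V)
    [DecidableRel G.Adj] : 0 ≤ specRad G :=
  Real.iSup_nonneg fun _ => abs_nonneg _

section DeleteVertex

variable {V : Type*}

def restrictNe {α : Type*} (v : V) (x : V → α) : {u // u ≠ v} → α := fun u => x u

@[simp] lemma restrictNe_apply {α : Type*} (v : V) (x : V → α) (u : {u // u ≠ v}) :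
    restrictNe v x u = x u := rfl

@[simp] lemma restrictNe_smul (v : V) (c : ℝ) (x : V → ℝ) :
    restrictNe v (c • x) = c • restrictNe v x := rfl

variable (G : SimpleGraph V) [DecidableRel G.Adj] (v : V)

def neighborVec : {u // u ≠ v} → ℝ := restrictNe v (G.adjMatrix ℝ v)

lemma neighborVec_mul_self (u : {u // u ≠ v}) :
    neighborVec G v u * neighborVec G v u = neighborVec G v u := by
  simp only [neighborVec, restrictNe_apply, SimpleGraph.adjMatrix_apply]
  split <;> norm_num

lemma neighborVec_nonneg : 0 ≤ neighborVec G v := fun u =>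
  G.adjMatrix_apply_nonneg v u

variable [Fintype V] [DecidableEq V]

omit [DecidableRel G.Adj] in
lemma dotProduct_eq_add_restrictNe (x w : V → ℝ) :
    x ⬝ᵥ w = x v * w v + restrictNe v x ⬝ᵥ restrictNe v w :=
  Fintype.sum_eq_add_sum_subtype_ne _ v

lemma adjMatrix_mulVec_apply_self (x : V → ℝ) :
    (G.adjMatrix ℝ *ᵥ x) v = neighborVec G v ⬝ᵥ restrictNe v x := by
  have hvv : G.adjMatrix ℝ v v = 0 := by simp
  rw [mulVec, dotProduct_eq_add_restrictNe v, hvv, zero_mul, zero_add]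
  rfl

lemma restrictNe_adjMatrix_mulVec (x : V → ℝ) :
    restrictNe v (G.adjMatrix ℝ *ᵥ x) =
      (deleteVertex G v).adjMatrix ℝ *ᵥ restrictNe v x + x v • neighborVec G v := by
  ext u
  rw [restrictNe_apply, mulVec, dotProduct_eq_add_restrictNe v, add_comm]
  simp only [Pi.add_apply, Pi.smul_apply, smul_eq_mul, neighborVec, restrictNe_apply,
    G.isSymm_adjMatrix.apply v u, mul_comm (x v)]
  rfl

lemma sum_neighborVec : ∑ u, neighborVec G v u = G.degree v := by
  have h := dotProduct_eq_add_restrictNe v (G.adjMatrix ℝ v) (Function.const V 1)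
  rw [← mulVec, G.adjMatrix_mulVec_const_apply] at h
  simpa [neighborVec, dotProduct] using h.symm

lemma neighborVec_dotProduct_self : neighborVec G v ⬝ᵥ neighborVec G v = G.degree v := by
  simp only [dotProduct, neighborVec_mul_self, sum_neighborVec]

lemma neighborVec_dotProduct_mulVec_le_mul_sub_one
    (hd : 1 ≤ G.degree v) {c : ℝ} (hc : ∀ i, (adjHerm G).eigenvalues i ≤ c) :
    neighborVec G v ⬝ᵥ ((deleteVertex G v).adjMatrix ℝ *ᵥ neighborVec G v) ≤
      (G.degree v - 1) * c := by
  set a := neighborVec G v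
  have hd1 : (1 : ℝ) ≤ G.degree v := by exact_mod_cast hd
  have hcount := (deleteVertex G v).dotProduct_adjMatrix_mulVec_le (neighborVec_nonneg G v)
  rw [sum_neighborVec, neighborVec_dotProduct_self] at hcount
  rcases le_or_gt (G.degree v : ℝ) c with hdc | hcd
  · nlinarith
  set z : V → ℝ := Pi.single v 1 + G.adjMatrix ℝ v
  have hzv : z v = 1 := by simp [z]
  have hz : restrictNe v z = a := by
    ext u
    simp [z, a, neighborVec, u.2]
  have hRayleigh := dotProduct_mulVec_le_of_eigenvalues_le (adjHerm G) hc z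
  rw [dotProduct_eq_add_restrictNe v z, adjMatrix_mulVec_apply_self,
    restrictNe_adjMatrix_mulVec, dotProduct_eq_add_restrictNe v z z, hzv, hz, dotProduct_add,
    dotProduct_smul, neighborVec_dotProduct_self, smul_eq_mul] at hRayleigh
  nlinarith

lemma apply_ne_zero_of_adjMatrix_mulVec_eq_smul {ρ μ : ℝ}
    (hρ : ∀ j, |(adjHerm (deleteVertex G v)).eigenvalues j| ≤ ρ) (hρμ : ρ < μ) {x : V → ℝ}
    (hx : G.adjMatrix ℝ *ᵥ x = μ • x) (hx0 : x ≠ 0) : x v ≠ 0 := by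
  intro hxv
  have hy : (deleteVertex G v).adjMatrix ℝ *ᵥ restrictNe v x = μ • restrictNe v x := by
    simpa [hx, hxv] using (restrictNe_adjMatrix_mulVec G v x).symm
  have hy0 : restrictNe v x ≠ 0 := fun h =>
    hx0 (funext fun u => if hu : u = v then hu ▸ hxv else congrFun h ⟨u, hu⟩)
  obtain ⟨j, hj⟩ := (adjHerm _).exists_eigenvalues_eq_of_mulVec_eq_smul hy hy0
  linarith [hρ j, le_abs_self ((adjHerm (deleteVertex G v)).eigenvalues j)]

lemma sq_le_of_adjMatrix_mulVec_eq_smul (hd : 1 ≤ G.degree v) {ρ μ : ℝ} (hρ0 : 0 ≤ ρ)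
    (hρ : ∀ j, |(adjHerm (deleteVertex G v)).eigenvalues j| ≤ ρ) (hρμ : ρ < μ)
    (hμ : ∀ i, (adjHerm G).eigenvalues i ≤ μ) {x : V → ℝ}
    (hx : G.adjMatrix ℝ *ᵥ x = μ • x) (hx0 : x ≠ 0) :
    μ ^ 2 ≤ ρ ^ 2 + 2 * G.degree v - 1 := by
  have hxv := apply_ne_zero_of_adjMatrix_mulVec_eq_smul G v hρ hρμ hx hx0
  set y := (x v)⁻¹ • restrictNe v x
  have hy : (deleteVertex G v).adjMatrix ℝ *ᵥ y = μ • y - neighborVec G v := by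
    have h := restrictNe_adjMatrix_mulVec G v x
    rw [hx, restrictNe_smul, eq_comm, ← eq_sub_iff_add_eq] at h
    rw [mulVec_smul, h, smul_sub, smul_comm _ μ, inv_smul_smul₀ hxv]
  have hay : neighborVec G v ⬝ᵥ y = μ := by
    have h := adjMatrix_mulVec_apply_self G v x
    rw [hx, Pi.smul_apply, smul_eq_mul] at h
    rw [dotProduct_smul, ← h, smul_eq_mul, mul_comm μ, inv_mul_cancel_left₀ hxv]
  have hkey := sq_sub_sq_mul_dotProduct_le (adjHerm _) hρ hρμ.le hy
  rw [hay, neighborVec_dotProduct_self] at hkey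
  have hcount := neighborVec_dotProduct_mulVec_le_mul_sub_one G v hd hμ
  have hμ0 : 0 < μ := hρ0.trans_lt hρμ
  nlinarith

end DeleteVertex

/-- **Sun–Das / Guo–Wang–Li.** For a finite simple graph `G` and a non-isolated
vertex `v`, `λ(G) ≤ sqrt(λ(G - v)^2 + 2 d(v) - 1)`. -/
theorem spectral_radius_delete_vertex {V : Type*} [Fintype V] [DecidableEq V]
    (G : SimpleGraph V) [DecidableRel G.Adj] (v : V) (hv : 1 ≤ G.degree v) :
    specRad G ≤ Real.sqrt (specRad (deleteVertex G v) ^ 2 + 2 * (G.degree v : ℝ) - 1) := by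
  have hA := adjHerm G
  have : Nonempty V := ⟨v⟩
  obtain ⟨i₀, hμ⟩ := Finite.exists_max hA.eigenvalues
  set μ := hA.eigenvalues i₀
  set ρ := specRad (deleteVertex G v)
  have hPerron : ∀ i, |hA.eigenvalues i| ≤ μ := fun i =>
    abs_le_of_mulVec_eq_smul_of_nonneg hA G.adjMatrix_apply_nonneg hμ
      (hA.mulVec_eigenvectorBasis i) (hA.eigenvectorBasis_ne_zero i)
  refine (ciSup_le hPerron).trans (Real.le_sqrt_of_sq_le ?_)
  rcases le_or_gt μ ρ with hμρ | hρμ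
  · have hd : (1 : ℝ) ≤ G.degree v := by exact_mod_cast hv
    nlinarith [(abs_nonneg _).trans (hPerron i₀)]
  · exact sq_le_of_adjMatrix_mulVec_eq_smul G v hv (specRad_nonneg _)
      (abs_eigenvalues_le_specRad _) hρμ hμ
        (hA.mulVec_eigenvectorBasis i₀) (hA.eigenvectorBasis_ne_zero i₀)
end

section
/- Let G be a finite simple graph on n vertices with m edges and with no isolated vertices, and let v be a vertex whose degree satisfies d(v) ≤ 2m/n. Then λ(G) ≤ λ(G − v) + 1. -/
open Matrix

section Aux

variable {V : Type*} [Fintype V] [DecidableEq V] {A : Matrix V V ℝ} (hA : A.IsHermitian)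

/-- Viewing a plain function as an element of Euclidean space. -/
noncomputable def toE (x : V → ℝ) : EuclideanSpace ℝ V := (WithLp.equiv 2 (V → ℝ)).symm x

omit [DecidableEq V] in
lemma inner_eq_dot (x y : V → ℝ) :
    @inner ℝ _ _ (toE x) (toE y) = x ⬝ᵥ y := by
  simp [toE, PiLp.inner_apply, dotProduct, RCLike.inner_apply, mul_comm]

lemma basis_dot (x : V → ℝ) (i : V) :
    @inner ℝ _ _ (hA.eigenvectorBasis i) (toE x) = ⇑(hA.eigenvectorBasis i) ⬝ᵥ x := by
  rw [show hA.eigenvectorBasis i = toE ⇑(hA.eigenvectorBasis i) from rfl, inner_eq_dot]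
  rfl

lemma basis_dot' (x : V → ℝ) (i : V) :
    @inner ℝ _ _ (toE x) (hA.eigenvectorBasis i) = ⇑(hA.eigenvectorBasis i) ⬝ᵥ x := by
  rw [real_inner_comm]; exact basis_dot hA x i

lemma dot_self_eq (x : V → ℝ) : x ⬝ᵥ x = ∑ i, (⇑(hA.eigenvectorBasis i) ⬝ᵥ x)^2 := by
  have h := (hA.eigenvectorBasis).sum_inner_mul_inner (toE x) (toE x)
  rw [inner_eq_dot] at h
  rw [← h]
  refine Finset.sum_congr rfl fun i _ => ?_
  rw [basis_dot hA x i, basis_dot' hA x i, sq]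

lemma eigen_dot (x : V → ℝ) (i : V) :
    ⇑(hA.eigenvectorBasis i) ⬝ᵥ (A *ᵥ x) = hA.eigenvalues i * (⇑(hA.eigenvectorBasis i) ⬝ᵥ x) := by
  rw [dotProduct_mulVec, ← mulVec_transpose,
    show Aᵀ = A by rw [← Matrix.conjTranspose_eq_transpose_of_trivial]; exact hA,
    hA.mulVec_eigenvectorBasis, smul_dotProduct]
  rfl

lemma dot_mulVec_eq (x : V → ℝ) :
    x ⬝ᵥ A *ᵥ x = ∑ i, hA.eigenvalues i * (⇑(hA.eigenvectorBasis i) ⬝ᵥ x)^2 := by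
  have h := (hA.eigenvectorBasis).sum_inner_mul_inner (toE x) (toE (A *ᵥ x))
  rw [inner_eq_dot] at h
  rw [← h]
  refine Finset.sum_congr rfl fun i _ => ?_
  rw [basis_dot' hA x i, basis_dot hA (A *ᵥ x) i, eigen_dot hA x i]
  ring

/-- Rayleigh-type upper bound: the quadratic form is at most the spectral
radius times the squared norm. -/
lemma rayleigh_le (x : V → ℝ) :
    x ⬝ᵥ A *ᵥ x ≤ (⨆ i, |hA.eigenvalues i|) * (x ⬝ᵥ x) := by
  rw [dot_mulVec_eq hA x, dot_self_eq hA x, Finset.mul_sum]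
  refine Finset.sum_le_sum fun i _ => ?_
  have h1 : hA.eigenvalues i ≤ ⨆ j, |hA.eigenvalues j| :=
    (le_abs_self _).trans
      (le_ciSup (f := fun j => |hA.eigenvalues j|)
        (Set.Finite.bddAbove (Set.finite_range _)) i)
  exact mul_le_mul_of_nonneg_right h1 (sq_nonneg _)

/-- A Perron-type nonnegative near-eigenvector. -/
lemma exists_perron [Nonempty V] (hpos : ∀ i j, 0 ≤ A i j) :
    ∃ x : V → ℝ, (∀ i, 0 ≤ x i) ∧ x ⬝ᵥ x = 1 ∧
      (⨆ i, |hA.eigenvalues i|) ≤ x ⬝ᵥ A *ᵥ x := by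
  obtain ⟨j, hj⟩ := Finite.exists_max (fun i => |hA.eigenvalues i|)
  set y : V → ℝ := ⇑(hA.eigenvectorBasis j) with hy
  have hyy : y ⬝ᵥ y = 1 := by
    have hn : ‖hA.eigenvectorBasis j‖ = 1 := (hA.eigenvectorBasis).orthonormal.1 j
    have := inner_eq_dot (V := V) y y
    rw [show toE y = hA.eigenvectorBasis j from rfl] at this
    rw [← this, real_inner_self_eq_norm_sq, hn]; norm_num
  refine ⟨fun i => |y i|, fun i => abs_nonneg _, ?_, ?_⟩
  · have : (fun i => |y i|) ⬝ᵥ (fun i => |y i|) = y ⬝ᵥ y := by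
      simp [dotProduct, abs_mul_abs_self]
    rw [this, hyy]
  · have hray : y ⬝ᵥ A *ᵥ y = hA.eigenvalues j := by
      have h := eigen_dot hA y j
      rw [show ⇑(hA.eigenvectorBasis j) = y from rfl, hyy, mul_one] at h
      exact h
    have habs : |y ⬝ᵥ A *ᵥ y| ≤ (fun i => |y i|) ⬝ᵥ A *ᵥ (fun i => |y i|) := by
      simp only [dotProduct, mulVec]
      refine (Finset.abs_sum_le_sum_abs _ _).trans (Finset.sum_le_sum fun i _ => ?_)
      rw [abs_mul]
      refine mul_le_mul_of_nonneg_left ?_ (abs_nonneg _)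
      refine (Finset.abs_sum_le_sum_abs _ _).trans (Finset.sum_le_sum fun k _ => ?_)
      rw [abs_mul, abs_of_nonneg (hpos i k)]
    have h2 : (⨆ i, |hA.eigenvalues i|) ≤ |y ⬝ᵥ A *ᵥ y| := by
      rw [hray]; exact ciSup_le hj
    exact h2.trans habs

end Aux

/-- If `G` has no isolated vertices and `v` is a vertex of degree at most the average
degree `2m/n`, then `λ(G) ≤ λ(G - v) + 1`. -/
theorem spectral_radius_delete_low_degree_vertex {V : Type*} [Fintype V] [DecidableEq V]
    (G : SimpleGraph V) [DecidableRel G.Adj] (hδ : ∀ u, 1 ≤ G.degree u) (v : V)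
    (hv : (G.degree v : ℝ) ≤ 2 * (G.edgeFinset.card : ℝ) / (Fintype.card V : ℝ)) :
    specRad G ≤ specRad (deleteVertex G v) + 1 := by
  classical
  have hne : Nonempty V := ⟨v⟩
  have hlam0 : 0 ≤ specRad G := Real.iSup_nonneg fun i => abs_nonneg _
  have hlam'0 : 0 ≤ specRad (deleteVertex G v) := Real.iSup_nonneg fun i => abs_nonneg _
  set lam := specRad G with hlamdef
  set lam' := specRad (deleteVertex G v) with hlam'def
  have hn0 : (0:ℝ) < (Fintype.card V : ℝ) := by
    exact_mod_cast Fintype.card_pos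
  -- average degree bound
  have havg : (2 * (G.edgeFinset.card : ℕ) : ℝ) ≤ lam * Fintype.card V := by
    have h := rayleigh_le (adjHerm G) (fun _ => (1:ℝ))
    have h1 : (fun _ => (1:ℝ)) ⬝ᵥ (G.adjMatrix ℝ *ᵥ fun _ => (1:ℝ)) = ∑ i, (G.degree i : ℝ) := by
      simp [dotProduct, mulVec, SimpleGraph.degree, SimpleGraph.neighborFinset_eq_filter,
        SimpleGraph.adjMatrix_apply, Finset.sum_boole]
    have h2 : ((fun _ => (1:ℝ)) : V → ℝ) ⬝ᵥ ((fun _ => (1:ℝ)) : V → ℝ) = (Fintype.card V : ℝ) := by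
      simp [dotProduct]
    rw [h1, h2] at h
    have h3 : (∑ i, (G.degree i : ℝ)) = (2 * (G.edgeFinset.card : ℕ) : ℝ) := by
      rw [← Nat.cast_sum]
      exact_mod_cast congrArg (Nat.cast : ℕ → ℝ) G.sum_degrees_eq_twice_card_edges
    rw [h3] at h
    exact h
  have hdlam : (G.degree v : ℝ) ≤ lam := by
    refine hv.trans ?_
    rw [div_le_iff₀ hn0]
    push_cast at havg ⊢
    linarith
  -- Perron vector
  obtain ⟨x, hx0, hx1, hxR⟩ := exists_perron (adjHerm G)
    (fun i j => by by_cases h : G.Adj i j <;> simp [h])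
  set E : Finset V := Finset.univ.erase v with hEdef
  have hE : ∀ u, u ∈ E ↔ u ≠ v := fun u => by simp [hEdef]
  set t := x v with htdef
  set s := ∑ u ∈ G.neighborFinset v, x u with hsdef
  set S := ∑ u ∈ E, (x u)^2 with hSdef
  have ht0 : 0 ≤ t := hx0 v
  have hs0 : 0 ≤ s := Finset.sum_nonneg fun u _ => hx0 u
  have hS0 : 0 ≤ S := Finset.sum_nonneg fun u _ => sq_nonneg _
  have hSsum : t^2 + S = 1 := by
    have : ∑ u, (x u)^2 = 1 := by
      rw [← hx1]; exact Finset.sum_congr rfl fun u _ => (sq (x u)).symm ▸ rfl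
    rw [htdef, hSdef, hEdef,
      Finset.add_sum_erase _ (fun u => (x u)^2) (Finset.mem_univ v)]
    exact this
  -- entries facts
  have hAsymm : ∀ i k, G.adjMatrix ℝ i k = G.adjMatrix ℝ k i := fun i k => by
    simp [SimpleGraph.adjMatrix_apply, SimpleGraph.adj_comm]
  have hsv : (G.adjMatrix ℝ *ᵥ x) v = s := G.adjMatrix_mulVec_apply v x
  have hrow : ∀ i, ∑ k ∈ E, G.adjMatrix ℝ i k * x k
      = (G.adjMatrix ℝ *ᵥ x) i - G.adjMatrix ℝ i v * t := by
    intro i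
    rw [show (G.adjMatrix ℝ *ᵥ x) i = ∑ k, G.adjMatrix ℝ i k * x k from rfl,
      ← Finset.add_sum_erase _ (fun k => G.adjMatrix ℝ i k * x k) (Finset.mem_univ v)]
    rw [htdef, hEdef]; ring
  have hEs : ∑ i ∈ E, G.adjMatrix ℝ i v * x i = s := by
    have h0 : ∑ i, G.adjMatrix ℝ v i * x i = s := hsv
    rw [← Finset.add_sum_erase _ (fun i => G.adjMatrix ℝ v i * x i) (Finset.mem_univ v)] at h0
    have hvv : G.adjMatrix ℝ v v = 0 := by simp
    rw [hvv, zero_mul, zero_add] at h0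
    rw [← h0, hEdef]
    exact Finset.sum_congr rfl fun i _ => by rw [hAsymm]
  -- decomposition
  have hsplit : x ⬝ᵥ (G.adjMatrix ℝ *ᵥ x)
      = 2*t*s + ∑ i ∈ E, x i * ∑ k ∈ E, G.adjMatrix ℝ i k * x k := by
    have e1 : x ⬝ᵥ (G.adjMatrix ℝ *ᵥ x) = ∑ i, x i * (G.adjMatrix ℝ *ᵥ x) i := rfl
    rw [e1, ← Finset.add_sum_erase _ (fun i => x i * (G.adjMatrix ℝ *ᵥ x) i) (Finset.mem_univ v),
      hsv, ← hEdef, ← htdef]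
    have e2 : ∑ i ∈ E, x i * (G.adjMatrix ℝ *ᵥ x) i
        = ∑ i ∈ E, (x i * (G.adjMatrix ℝ i v * t) + x i * ∑ k ∈ E, G.adjMatrix ℝ i k * x k) := by
      refine Finset.sum_congr rfl fun i _ => ?_
      rw [hrow i]; ring
    rw [e2, Finset.sum_add_distrib]
    have e3 : ∑ i ∈ E, x i * (G.adjMatrix ℝ i v * t) = t * s := by
      rw [← hEs, Finset.mul_sum]
      exact Finset.sum_congr rfl fun i _ => by ring
    rw [e3]; ring
  -- move Q to the subtype graph
  set y : {u // u ≠ v} → ℝ := fun u => x u.1 with hydef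
  have hQ : ∑ i ∈ E, x i * ∑ k ∈ E, G.adjMatrix ℝ i k * x k
      = y ⬝ᵥ ((deleteVertex G v).adjMatrix ℝ *ᵥ y) := by
    rw [Finset.sum_subtype E hE (fun i => x i * ∑ k ∈ E, G.adjMatrix ℝ i k * x k)]
    refine Finset.sum_congr rfl fun a _ => ?_
    congr 1
    rw [show ((deleteVertex G v).adjMatrix ℝ *ᵥ y) a
        = ∑ b : {u // u ≠ v}, (deleteVertex G v).adjMatrix ℝ a b * y b from rfl,
      Finset.sum_subtype E hE (fun k => G.adjMatrix ℝ a.1 k * x k)]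
    refine Finset.sum_congr rfl fun b _ => ?_
    have hAA : (deleteVertex G v).adjMatrix ℝ a b = G.adjMatrix ℝ a.1 b.1 := by
      by_cases h : G.Adj a.1 b.1 <;> simp [SimpleGraph.adjMatrix_apply, h]
    rw [hAA]
  have hyy : y ⬝ᵥ y = S := by
    rw [hSdef, Finset.sum_subtype E hE (fun u => (x u)^2)]
    exact (Finset.sum_congr rfl fun a _ => by rw [hydef, sq]).symm
  have hQle : y ⬝ᵥ ((deleteVertex G v).adjMatrix ℝ *ᵥ y) ≤ lam' * S := by
    have h := rayleigh_le (adjHerm (deleteVertex G v)) y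
    rw [hyy] at h
    exact h
  -- Cauchy-Schwarz
  have hcs : s^2 ≤ (G.degree v : ℝ) * S := by
    have h1 : s^2 ≤ ((G.neighborFinset v).card : ℝ) * ∑ u ∈ G.neighborFinset v, (x u)^2 := by
      exact_mod_cast sq_sum_le_card_mul_sum_sq (s := G.neighborFinset v) (f := x)
    have h2 : ∑ u ∈ G.neighborFinset v, (x u)^2 ≤ S := by
      refine Finset.sum_le_sum_of_subset_of_nonneg ?_ (fun u _ _ => sq_nonneg _)
      intro u hu
      rw [hE u]
      have hadj : G.Adj v u := by simpa using hu
      exact hadj.ne'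
    calc s^2 ≤ ((G.neighborFinset v).card : ℝ) * ∑ u ∈ G.neighborFinset v, (x u)^2 := h1
      _ ≤ (G.degree v : ℝ) * S := by
          rw [G.card_neighborFinset_eq_degree]
          exact mul_le_mul_of_nonneg_left h2 (Nat.cast_nonneg _)
  have hcs' : s^2 ≤ lam * S := hcs.trans (mul_le_mul_of_nonneg_right hdlam hS0)
  -- assemble
  have hxR' : lam ≤ x ⬝ᵥ (G.adjMatrix ℝ *ᵥ x) := hxR
  clear_value lam lam' t s S
  have hmain : lam ≤ 2*t*s + lam' * S := by
    calc lam ≤ x ⬝ᵥ (G.adjMatrix ℝ *ᵥ x) := hxR'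
      _ = 2*t*s + ∑ i ∈ E, x i * ∑ k ∈ E, G.adjMatrix ℝ i k * x k := hsplit
      _ ≤ 2*t*s + lam' * S := by rw [hQ]; linarith [hQle]
  rcases eq_or_lt_of_le hS0 with hSz | hSpos
  · have hs2 : s^2 ≤ 0 := by rw [← hSz] at hcs'; linarith only [hcs']
    have hsle : s ≤ 0 := by nlinarith only [hs2, hs0]
    have hsz : s = 0 := le_antisymm hsle hs0
    rw [← hSz, hsz] at hmain
    linarith only [hmain, hlam'0]
  · rcases eq_or_lt_of_le hlam0 with hlz | hlpos
    · linarith only [hlz, hlam'0]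
    · have hts : 2*t*s ≤ lam*t^2 + S := by
        nlinarith only [sq_nonneg (lam*t - s), hcs', hlpos, ht0, hs0]
      have hS1 : S = 1 - t^2 := by linarith only [hSsum]
      have h5 : lam ≤ lam' * S + lam * t^2 + S := by linarith only [hmain, hts]
      have h6 : lam * S = lam - lam * t^2 := by rw [hS1]; ring
      have h7 : (lam' + 1) * S = lam' * S + S := by ring
      have hfin : lam * S ≤ (lam' + 1) * S := by linarith only [h5, h6, h7]
      exact le_of_mul_le_mul_right (by linarith only [hfin]) hSpos
end

section
/- Let G be a finite simple graph, let v be a vertex of G with degree d(v), set λ = λ(G) and μ = λ(G − v), and suppose λ > μ. Then λ·(λ² − μ²) ≤ λ·d(v) + 2·e(G[N(v)]), where e(G[N(v)]) is the number of edges of the subgraph of G induced by the neighborhood of v. -/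
open Matrix

/-!
Let `A`, `B` be the adjacency matrices of `G` and `G - v`. Because `A` is entrywise nonnegative,
`λ` itself (not only `-λ`) is an eigenvalue of `A`; take an eigenvector `x`, and let `y` and `a`
be the restrictions of `x` and of the row `A v` to `V - v`, so that `B y = λ y - x_v a`.
Every eigenvalue `θ` of `B` has `|θ| ≤ μ < λ`, so `(μ² - B²)(λ - B)` is positive semidefinite, and
`yᵀ (μ² - B²)(λ - B) y = x_v² (λ μ² - λ³ + λ d(v) + 2 e(G[N(v)]))` using `aᵀ y = λ x_v`,
`aᵀ a = d(v)` and `aᵀ B a = 2 e(G[N(v)])`. Finally `x_v ≠ 0`, since otherwise `y` would be an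
eigenvector of `B` with eigenvalue `λ > μ`.
-/

open Polynomial Finset

namespace Matrix

theorem abs_dotProduct_mulVec_le {n : Type*} [Fintype n] {A : Matrix n n ℝ}
    (hA : ∀ i j, 0 ≤ A i j) (x : n → ℝ) : |x ⬝ᵥ (A *ᵥ x)| ≤ |x| ⬝ᵥ (A *ᵥ |x|) := by
  simp only [dotProduct, mulVec, mul_sum]
  refine (abs_sum_le_sum_abs _ _).trans (sum_le_sum fun i _ => ?_)
  refine (abs_sum_le_sum_abs _ _).trans (sum_le_sum fun j _ => ?_)
  simp [abs_mul, abs_of_nonneg (hA i j)]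

theorem dotProduct_comp_val_of_apply_eq_zero {V R : Type*} [Fintype V] [DecidableEq V]
    [NonUnitalNonAssocSemiring R] {v : V} {f : V → R} (hf : f v = 0) (g : V → R) :
    (f ∘ Subtype.val : {u // u ≠ v} → R) ⬝ᵥ (g ∘ Subtype.val) = f ⬝ᵥ g := by
  simp [dotProduct, Fintype.sum_eq_add_sum_subtype_ne _ v, hf]

theorem IsSymm.dotProduct_mulVec_comm {n R : Type*} [Fintype n] [CommSemiring R]
    {B : Matrix n n R} (hB : B.IsSymm) (u w : n → R) : u ⬝ᵥ (B *ᵥ w) = (B *ᵥ u) ⬝ᵥ w := by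
  rw [dotProduct_mulVec, ← vecMul_transpose, hB.eq]

theorem IsSymm.dotProduct_aeval_mulVec_eq {n R : Type*} [Fintype n] [DecidableEq n]
    [CommRing R] {B : Matrix n n R} (hB : B.IsSymm) {y a : n → R} {l s : R}
    (hy : B *ᵥ y = l • y - s • a) (c : R) :
    y ⬝ᵥ (aeval B ((C c - X ^ 2) * (C l - X)) *ᵥ y) =
      s * (c * (a ⬝ᵥ y) - l * (l * (a ⬝ᵥ y) - s * (a ⬝ᵥ a)) + s * (a ⬝ᵥ (B *ᵥ a))) := by
  have hly : (algebraMap R _ l - B) *ᵥ y = s • a := by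
    rw [sub_mulVec, hy, Algebra.algebraMap_eq_smul_one, smul_mulVec, one_mulVec, sub_sub_cancel]
  have hyB (z : n → R) : y ⬝ᵥ (B *ᵥ z) = l * (y ⬝ᵥ z) - s * (a ⬝ᵥ z) := by
    rw [hB.dotProduct_mulVec_comm, hy, sub_dotProduct, smul_dotProduct, smul_dotProduct,
      smul_eq_mul, smul_eq_mul]
  calc y ⬝ᵥ (aeval B ((C c - X ^ 2) * (C l - X)) *ᵥ y)
      = y ⬝ᵥ ((algebraMap R _ c - B ^ 2) *ᵥ (s • a)) := by
        simp only [map_mul, map_sub, map_pow, aeval_C, aeval_X, ← mulVec_mulVec, hly]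
    _ = s * (c * (a ⬝ᵥ y) - y ⬝ᵥ (B *ᵥ (B *ᵥ a))) := by
        simp only [Algebra.algebraMap_eq_smul_one, sub_mulVec, smul_mulVec, one_mulVec, sq,
          ← mulVec_mulVec, mulVec_smul, dotProduct_sub, dotProduct_smul, smul_eq_mul,
          dotProduct_comm y a]
    _ = _ := by rw [hyB, hyB, dotProduct_comm y a]; ring

namespace IsHermitian

open MatrixOrder ComplexOrder in
theorem posSemidef_aeval {n 𝕜 : Type*} [Fintype n] [DecidableEq n] [RCLike 𝕜]
    {A : Matrix n n 𝕜} (hA : A.IsHermitian) {q : ℝ[X]}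
    (hq : ∀ i, 0 ≤ q.eval (hA.eigenvalues i)) : (aeval A q).PosSemidef := by
  rw [← nonneg_iff_posSemidef, ← cfc_polynomial q A]
  refine cfc_nonneg fun t ht => ?_
  rw [hA.spectrum_real_eq_range_eigenvalues] at ht
  obtain ⟨i, rfl⟩ := ht
  exact hq i

variable {n : Type*} [Fintype n] [DecidableEq n] {A : Matrix n n ℝ}

theorem dotProduct_mulVec_le (hA : A.IsHermitian) {m : ℝ} (hm : ∀ i, hA.eigenvalues i ≤ m)
    (x : n → ℝ) : x ⬝ᵥ (A *ᵥ x) ≤ m * (x ⬝ᵥ x) := by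
  have h := (hA.posSemidef_aeval (q := C m - X) fun i => by simpa using hm i)
    |>.dotProduct_mulVec_nonneg x
  simpa only [star_trivial, map_sub, aeval_C, aeval_X, Algebra.algebraMap_eq_smul_one, sub_mulVec,
    smul_mulVec, one_mulVec, dotProduct_sub, dotProduct_smul, smul_eq_mul, sub_nonneg] using h

theorem exists_forall_abs_eigenvalues_le [Nonempty n] (hA : A.IsHermitian)
    (hA₀ : ∀ i j, 0 ≤ A i j) : ∃ j, ∀ i, |hA.eigenvalues i| ≤ hA.eigenvalues j := by
  obtain ⟨i₀, hi₀⟩ := Finite.exists_max fun i => |hA.eigenvalues i|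
  obtain ⟨j, hj⟩ := Finite.exists_max hA.eigenvalues
  refine ⟨j, fun i => (hi₀ i).trans ?_⟩
  set u : n → ℝ := ⇑(hA.eigenvectorBasis i₀)
  have hu : 0 < |u| ⬝ᵥ |u| := by
    have : |u| ≠ 0 := by simpa [u] using hA.eigenvectorBasis.orthonormal.ne_zero i₀
    simpa using dotProduct_star_self_pos_iff.mpr this
  refine le_of_mul_le_mul_right ?_ hu
  calc |hA.eigenvalues i₀| * (|u| ⬝ᵥ |u|) = |u ⬝ᵥ (A *ᵥ u)| := by
        have h : |u| ⬝ᵥ |u| = u ⬝ᵥ u := by simp [dotProduct, abs_mul_abs_self]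
        rw [hA.mulVec_eigenvectorBasis, dotProduct_smul, smul_eq_mul, abs_mul, h,
          abs_of_nonneg (a := u ⬝ᵥ u) (by simpa using dotProduct_star_self_nonneg u)]
    _ ≤ |u| ⬝ᵥ (A *ᵥ |u|) := abs_dotProduct_mulVec_le hA₀ u
    _ ≤ hA.eigenvalues j * (|u| ⬝ᵥ |u|) := hA.dotProduct_mulVec_le hj |u|

end IsHermitian

end Matrix

namespace SimpleGraph

variable {V R : Type*} [Fintype V] (G : SimpleGraph V) [DecidableRel G.Adj]

theorem sum_sum_adjMatrix_eq_two_mul_card_edgeFinset_induce [NonAssocSemiring R] (s : Set V)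
    [DecidablePred (· ∈ s)] :
    ∑ u ∈ s.toFinset, ∑ w ∈ s.toFinset, G.adjMatrix R u w = 2 * #(G.induce s).edgeFinset := by
  calc ∑ u ∈ s.toFinset, ∑ w ∈ s.toFinset, G.adjMatrix R u w
      = ∑ u : s, ∑ w : s, (G.induce s).adjMatrix R u w := by
        simp only [sum_subtype s.toFinset (fun _ => Set.mem_toFinset)]
        simp
    _ = ((G.induce s).adjMatrix R *ᵥ 1) ⬝ᵥ 1 := by simp [dotProduct, mulVec]
    _ = Fintype.card (G.induce s).Dart := (natCast_card_dart_eq_dotProduct _).symm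
    _ = 2 * #(G.induce s).edgeFinset := by rw [dart_card_eq_twice_card_edges]; push_cast; rfl

theorem adjMatrix_dotProduct_self [NonAssocSemiring R] (v : V) :
    G.adjMatrix R v ⬝ᵥ G.adjMatrix R v = G.degree v := by
  simp [filter_true_of_mem]

theorem adjMatrix_dotProduct_mulVec_self [NonAssocSemiring R] (v : V) :
    G.adjMatrix R v ⬝ᵥ (G.adjMatrix R *ᵥ G.adjMatrix R v) =
      2 * #(G.induce (G.neighborSet v)).edgeFinset := by
  rw [← sum_sum_adjMatrix_eq_two_mul_card_edgeFinset_induce, ← neighborFinset_def,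
    adjMatrix_dotProduct]
  simp only [mulVec, dotProduct_adjMatrix]

variable [DecidableEq V]

theorem abs_eigenvalues_le_specRad (i : V) : |(adjHerm G).eigenvalues i| ≤ specRad G :=
  le_ciSup (f := fun i => |(adjHerm G).eigenvalues i|) (Set.finite_range _).bddAbove i

theorem le_specRad_of_mulVec_eq_smul {x : V → ℝ} (hx : x ≠ 0) {c : ℝ}
    (h : G.adjMatrix ℝ *ᵥ x = c • x) : c ≤ specRad G := by
  have hpos : 0 < x ⬝ᵥ x := by simpa using dotProduct_star_self_pos_iff.mpr hx
  refine le_of_mul_le_mul_right ?_ hpos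
  calc c * (x ⬝ᵥ x) = x ⬝ᵥ (G.adjMatrix ℝ *ᵥ x) := by rw [h, dotProduct_smul, smul_eq_mul]
    _ ≤ specRad G * (x ⬝ᵥ x) := (adjHerm G).dotProduct_mulVec_le
        (fun i => (le_abs_self _).trans (G.abs_eigenvalues_le_specRad i)) x

theorem exists_adjMatrix_mulVec_eq_specRad_smul [Nonempty V] :
    ∃ x ≠ 0, G.adjMatrix ℝ *ᵥ x = specRad G • x := by
  obtain ⟨j, hj⟩ := (adjHerm G).exists_forall_abs_eigenvalues_le fun u w => by
    simp only [adjMatrix_apply]; split_ifs <;> norm_num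
  have hj' : specRad G = (adjHerm G).eigenvalues j :=
    le_antisymm (ciSup_le hj) ((le_abs_self _).trans (G.abs_eigenvalues_le_specRad j))
  refine ⟨⇑((adjHerm G).eigenvectorBasis j), ?_, hj' ▸ (adjHerm G).mulVec_eigenvectorBasis j⟩
  simpa using (adjHerm G).eigenvectorBasis.orthonormal.ne_zero j

section DeleteVertex

variable (v : V)

theorem adjMatrix_deleteVertex_mulVec [CommRing R] (x : V → R) :
    (deleteVertex G v).adjMatrix R *ᵥ (x ∘ Subtype.val) =
      (G.adjMatrix R *ᵥ x) ∘ Subtype.val - x v • (G.adjMatrix R v ∘ Subtype.val) := by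
  ext u
  simp [mulVec, dotProduct, Fintype.sum_eq_add_sum_subtype_ne _ v, adj_comm, mul_comm]

variable {x : V → ℝ} {l : ℝ}

theorem adjMatrix_deleteVertex_mulVec_of_mulVec_eq_smul (hAx : G.adjMatrix ℝ *ᵥ x = l • x) :
    (deleteVertex G v).adjMatrix ℝ *ᵥ (x ∘ Subtype.val) =
      l • (x ∘ Subtype.val) - x v • (G.adjMatrix ℝ v ∘ Subtype.val) := by
  rw [adjMatrix_deleteVertex_mulVec, hAx]
  rfl

variable {v}

theorem apply_ne_zero_of_specRad_deleteVertex_lt (hx : x ≠ 0) (hAx : G.adjMatrix ℝ *ᵥ x = l • x)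
    (hlt : specRad (deleteVertex G v) < l) : x v ≠ 0 := by
  intro h0
  obtain ⟨u, hu⟩ := Function.ne_iff.mp hx
  have hy : x ∘ Subtype.val ≠ (0 : {u // u ≠ v} → ℝ) :=
    Function.ne_iff.mpr ⟨⟨u, by rintro rfl; exact hu h0⟩, hu⟩
  refine hlt.not_ge ((deleteVertex G v).le_specRad_of_mulVec_eq_smul hy ?_)
  simpa [h0] using G.adjMatrix_deleteVertex_mulVec_of_mulVec_eq_smul v hAx

theorem dotProduct_aeval_adjMatrix_deleteVertex_mulVec (hAx : G.adjMatrix ℝ *ᵥ x = l • x)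
    (c : ℝ) :
    (x ∘ Subtype.val) ⬝ᵥ (aeval ((deleteVertex G v).adjMatrix ℝ) ((C c - X ^ 2) * (C l - X)) *ᵥ
      (x ∘ Subtype.val)) =
      x v ^ 2 *
        (l * c - l ^ 3 + l * G.degree v + 2 * #(G.induce (G.neighborSet v)).edgeFinset) := by
  -- `A v v = 0`, so every dot product over `V - v` below can be taken over `V`
  have hvv : G.adjMatrix ℝ v v = 0 := by simp
  rw [(deleteVertex G v).isSymm_adjMatrix.dotProduct_aeval_mulVec_eq
      (G.adjMatrix_deleteVertex_mulVec_of_mulVec_eq_smul v hAx),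
    adjMatrix_deleteVertex_mulVec, hvv, zero_smul, sub_zero,
    dotProduct_comp_val_of_apply_eq_zero hvv, dotProduct_comp_val_of_apply_eq_zero hvv,
    dotProduct_comp_val_of_apply_eq_zero hvv, adjMatrix_dotProduct_self,
    adjMatrix_dotProduct_mulVec_self, ← mulVec, hAx]
  simp only [Pi.smul_apply, smul_eq_mul]
  ring

end DeleteVertex

end SimpleGraph

/-- With `λ = λ(G)`, `μ = λ(G - v)` and `λ > μ`, one has
`λ(λ² - μ²) ≤ λ d(v) + 2 e(G[N(v)])`. -/
theorem lambda_mul_gap_le {V : Type*} [Fintype V] [DecidableEq V]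
    (G : SimpleGraph V) [DecidableRel G.Adj] (v : V)
    (hlt : specRad (deleteVertex G v) < specRad G) :
    specRad G * (specRad G ^ 2 - specRad (deleteVertex G v) ^ 2) ≤
      specRad G * (G.degree v : ℝ) +
        2 * ((G.induce (G.neighborSet v)).edgeFinset.card : ℝ) := by
  have : Nonempty V := ⟨v⟩
  obtain ⟨x, hx, hAx⟩ := G.exists_adjMatrix_mulVec_eq_specRad_smul
  have hxv : x v ≠ 0 := G.apply_ne_zero_of_specRad_deleteVertex_lt hx hAx hlt
  set l := specRad G
  set m := specRad (deleteVertex G v)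
  have hform := ((adjHerm (deleteVertex G v)).posSemidef_aeval
    (q := (C (m ^ 2) - X ^ 2) * (C l - X)) fun i => by
      obtain ⟨h₁, h₂⟩ := abs_le.mp ((deleteVertex G v).abs_eigenvalues_le_specRad i : _ ≤ m)
      simp only [eval_mul, eval_sub, eval_C, eval_pow, eval_X]
      exact mul_nonneg (by nlinarith) (by linarith)).dotProduct_mulVec_nonneg (x ∘ Subtype.val)
  rw [star_trivial, G.dotProduct_aeval_adjMatrix_deleteVertex_mulVec hAx] at hform
  linarith [(mul_nonneg_iff_of_pos_left (by positivity : 0 < x v ^ 2)).mp hform]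
end

section
/- Let G be a finite simple graph and let v be a vertex of G with degree d(v) ≥ 2. Then 2·e(G[N(v)]) ≤ λ(G)·(d(v) − 1), where e(G[N(v)]) is the number of edges of the subgraph of G induced by the neighborhood of v. -/
open Matrix

/-!
The indicator vector `x` of the closed neighbourhood `{v} ∪ N(v)` has `xᵀ A x = 2 e + 2 d`,
where `e = e(G[N(v)])` and `d = d(v)` (each edge inside `N(v)` and each edge `vu` is counted
twice), and `xᵀ x = d + 1`, so the Rayleigh bound `xᵀ A x ≤ λ xᵀ x` gives `2 e + 2 d ≤ λ (d + 1)`.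
Multiplying by `d - 1 ≥ 0` and using `4 e ≤ 2 d (d - 1)` yields `2 e (d + 1) ≤ λ (d - 1) (d + 1)`.
-/

open Finset

namespace Matrix.IsHermitian

open scoped MatrixOrder

lemma dotProduct_mulVec_self_le {n : Type*} [Fintype n] [DecidableEq n] {A : Matrix n n ℝ}
    (hA : A.IsHermitian) {M : ℝ} (hM : ∀ i, hA.eigenvalues i ≤ M) (x : n → ℝ) :
    x ⬝ᵥ A *ᵥ x ≤ M * (x ⬝ᵥ x) := by
  have hAM : A ≤ algebraMap ℝ (Matrix n n ℝ) M := by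
    refine le_algebraMap_of_spectrum_le (fun r hr => ?_) hA.isSelfAdjoint
    rw [hA.spectrum_real_eq_range_eigenvalues] at hr
    obtain ⟨i, rfl⟩ := hr
    exact hM i
  have hgap := (le_iff.mp hAM).dotProduct_mulVec_nonneg x
  simp only [star_trivial, Algebra.algebraMap_eq_smul_one, sub_mulVec, smul_mulVec, one_mulVec,
    dotProduct_sub, dotProduct_smul, smul_eq_mul, sub_nonneg] at hgap
  linarith

end Matrix.IsHermitian

lemma indicator_one_dotProduct_indicator_one {α R : Type*} [Fintype α] [NonAssocSemiring R]
    (s : Finset α) : (s : Set α).indicator 1 ⬝ᵥ (s : Set α).indicator (1 : α → R) = #s := by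
  classical
  simp [dotProduct, Set.indicator_apply]

namespace SimpleGraph

lemma two_mul_card_edgeFinset_le {V : Type*} [Fintype V] (G : SimpleGraph V)
    [DecidableRel G.Adj] :
    2 * (#G.edgeFinset : ℝ) ≤ Fintype.card V * (Fintype.card V - 1) := by
  calc 2 * (#G.edgeFinset : ℝ) ≤ 2 * ((Fintype.card V).choose 2 : ℕ) := by
        gcongr; exact_mod_cast G.card_edgeFinset_le_card_choose_two
    _ = Fintype.card V * (Fintype.card V - 1) := by rw [Nat.cast_choose_two]; ring

variable {V : Type*} [Fintype V] [DecidableEq V] (G : SimpleGraph V) [DecidableRel G.Adj]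

lemma dotProduct_adjMatrix_mulVec_le_specRad (x : V → ℝ) :
    x ⬝ᵥ G.adjMatrix ℝ *ᵥ x ≤ specRad G * (x ⬝ᵥ x) :=
  (adjHerm G).dotProduct_mulVec_self_le (fun i => (le_abs_self _).trans
    (le_ciSup (f := fun j => |(adjHerm G).eigenvalues j|) (Set.finite_range _).bddAbove i)) x

lemma indicator_one_dotProduct_adjMatrix_mulVec_indicator_one (R : Type*) [NonAssocSemiring R]
    (s : Finset V) :
    (s : Set V).indicator 1 ⬝ᵥ G.adjMatrix R *ᵥ (s : Set V).indicator 1 =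
      ∑ u ∈ s, #(G.neighborFinset u ∩ s) := by
  simp [dotProduct, adjMatrix_mulVec_apply, Set.indicator_apply, sum_ite_mem]

lemma sum_card_neighborFinset_inter_toFinset (s : Set V) [DecidablePred (· ∈ s)] :
    ∑ u ∈ s.toFinset, #(G.neighborFinset u ∩ s.toFinset) = 2 * #(G.induce s).edgeFinset := by
  calc ∑ u ∈ s.toFinset, #(G.neighborFinset u ∩ s.toFinset)
      = ∑ u : s, #(G.neighborFinset u ∩ s.toFinset) := sum_toFinset_eq_subtype (· ∈ s) _
    _ = ∑ u : s, (G.induce s).degree u := by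
      simp_rw [← map_neighborFinset_induce, card_map, card_neighborFinset_eq_degree]
      rfl
    _ = 2 * #(G.induce s).edgeFinset := sum_degrees_eq_twice_card_edges _

lemma sum_card_neighborFinset_inter_insert {s : Finset V} {v : V} (hv : v ∉ s) :
    ∑ u ∈ insert v s, #(G.neighborFinset u ∩ insert v s) =
      ∑ u ∈ s, #(G.neighborFinset u ∩ s) + 2 * #(G.neighborFinset v ∩ s) := by
  have hterm : ∀ u ∈ s, #(G.neighborFinset u ∩ insert v s) =
      #(G.neighborFinset u ∩ s) + if G.Adj v u then 1 else 0 := by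
    intro u _
    by_cases huv : G.Adj v u
    · rw [inter_insert_of_mem (by simpa [adj_comm] using huv),
        card_insert_of_notMem fun h => hv (mem_inter.mp h).2, if_pos huv]
    · rw [inter_insert_of_notMem (by simpa [adj_comm] using huv), if_neg huv, add_zero]
  have hneighbors : ∑ u ∈ s, (if G.Adj v u then 1 else 0) = #(G.neighborFinset v ∩ s) := by
    rw [sum_boole, Nat.cast_id]
    congr 1
    ext u
    simp [and_comm]
  rw [sum_insert hv, inter_insert_of_notMem (G.notMem_neighborFinset_self v),
    sum_congr rfl hterm, sum_add_distrib, hneighbors]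
  ring

end SimpleGraph

open SimpleGraph in
/-- If `v` has degree at least `2`, then `2 e(G[N(v)]) ≤ λ(G) (d(v) - 1)`. -/
theorem edges_neighborhood_le {V : Type*} [Fintype V] [DecidableEq V]
    (G : SimpleGraph V) [DecidableRel G.Adj] (v : V) (hv : 2 ≤ G.degree v) :
    2 * ((G.induce (G.neighborSet v)).edgeFinset.card : ℝ) ≤
      specRad G * ((G.degree v : ℝ) - 1) := by
  have hvN : v ∉ G.neighborFinset v := G.notMem_neighborFinset_self v
  have hclosed : ∑ u ∈ insert v (G.neighborFinset v),
      #(G.neighborFinset u ∩ insert v (G.neighborFinset v)) =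
        2 * #(G.induce (G.neighborSet v)).edgeFinset + 2 * G.degree v := by
    rw [sum_card_neighborFinset_inter_insert G hvN, inter_self, card_neighborFinset_eq_degree,
      neighborFinset_def, sum_card_neighborFinset_inter_toFinset]
  have hrayleigh : 2 * (#(G.induce (G.neighborSet v)).edgeFinset : ℝ) + 2 * G.degree v ≤
      specRad G * (G.degree v + 1) := by
    have := G.dotProduct_adjMatrix_mulVec_le_specRad
      (((insert v (G.neighborFinset v) : Finset V) : Set V).indicator 1)
    rw [indicator_one_dotProduct_adjMatrix_mulVec_indicator_one,
      indicator_one_dotProduct_indicator_one, card_insert_of_notMem hvN,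
      card_neighborFinset_eq_degree, hclosed] at this
    exact_mod_cast this
  have hedges := (G.induce (G.neighborSet v)).two_mul_card_edgeFinset_le
  rw [card_neighborSet_eq_degree] at hedges
  have hd : (2 : ℝ) ≤ G.degree v := by exact_mod_cast hv
  nlinarith
end

section
/- Let G be a finite simple graph on n vertices with m edges and with minimum degree at least 1. Then λ(G) ≤ sqrt(2m − n + 1) (Hong's inequality; it follows from the bound λ(G) ≤ sqrt(λ(G − v)² + 2·d(v) − 1) by deleting vertices). -/
/-!
If `A x = μ x` and `w` maximises `|x w|`, then evaluating `A² x = μ² x` at `w` and bounding each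
`|x u|` by `|x w|` gives `μ² ≤ ∑_{p ~ w} d(p)`. The degrees of `w` and of its non-neighbours
account for at least `d(w) + (n - 1 - d(w))` of the `2m` degree total, since every degree is at
least one; hence `∑_{p ~ w} d(p) ≤ 2m - n + 1`.
-/

open Matrix

open Finset

namespace SimpleGraph

variable {V : Type*} [Fintype V] (G : SimpleGraph V) [DecidableRel G.Adj]

theorem sum_degree_neighborFinset_add_card_le [DecidableEq V] (hδ : ∀ v, 1 ≤ G.degree v)
    (w : V) :
    ∑ p ∈ G.neighborFinset w, G.degree p + Fintype.card V ≤ 2 * #G.edgeFinset + 1 := by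
  have hw : w ∈ (G.neighborFinset w)ᶜ := by simp
  have hsplit : ∑ p ∈ G.neighborFinset w, G.degree p +
      (G.degree w + ∑ p ∈ ((G.neighborFinset w)ᶜ).erase w, G.degree p) =
        2 * #G.edgeFinset := by
    rw [add_sum_erase _ (fun p => G.degree p) hw, sum_add_sum_compl,
      sum_degrees_eq_twice_card_edges]
  have hrest : #(((G.neighborFinset w)ᶜ).erase w) ≤
      ∑ p ∈ ((G.neighborFinset w)ᶜ).erase w, G.degree p := by
    simpa only [smul_eq_mul, mul_one] using
      card_nsmul_le_sum _ (fun p => G.degree p) 1 fun p _ => hδ p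
  have hcard : #(((G.neighborFinset w)ᶜ).erase w) = Fintype.card V - G.degree w - 1 := by
    rw [card_erase_of_mem hw, card_compl, card_neighborFinset_eq_degree]
  have := G.degree_lt_card_verts w
  omega

theorem sum_degree_neighborFinset_le [DecidableEq V] (hδ : ∀ v, 1 ≤ G.degree v) (w : V) :
    ∑ p ∈ G.neighborFinset w, (G.degree p : ℝ) ≤
      2 * (#G.edgeFinset : ℝ) - (Fintype.card V : ℝ) + 1 := by
  have h : ((∑ p ∈ G.neighborFinset w, G.degree p + Fintype.card V : ℕ) : ℝ) ≤
      ((2 * #G.edgeFinset + 1 : ℕ) : ℝ) := by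
    exact_mod_cast G.sum_degree_neighborFinset_add_card_le hδ w
  push_cast at h
  linarith

variable {G}

theorem abs_adjMatrix_mulVec_apply_le {x : V → ℝ} {c : ℝ} (hx : ∀ u, |x u| ≤ c) (v : V) :
    |(G.adjMatrix ℝ *ᵥ x) v| ≤ G.degree v * c := by
  rw [adjMatrix_mulVec_apply, ← card_neighborFinset_eq_degree, ← nsmul_eq_mul]
  exact (abs_sum_le_sum_abs _ _).trans (sum_le_card_nsmul _ _ _ fun u _ => hx u)

theorem abs_adjMatrix_mulVec_adjMatrix_mulVec_apply_le {x : V → ℝ} {c : ℝ}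
    (hx : ∀ u, |x u| ≤ c) (w : V) :
    |(G.adjMatrix ℝ *ᵥ (G.adjMatrix ℝ *ᵥ x)) w| ≤
      (∑ p ∈ G.neighborFinset w, (G.degree p : ℝ)) * c := by
  rw [adjMatrix_mulVec_apply, sum_mul]
  exact (abs_sum_le_sum_abs _ _).trans
    (sum_le_sum fun p _ => abs_adjMatrix_mulVec_apply_le hx p)

theorem sq_le_of_adjMatrix_mulVec_eq_smul {μ : ℝ} {x : V → ℝ} (hx : x ≠ 0)
    (hμ : G.adjMatrix ℝ *ᵥ x = μ • x) {B : ℝ}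
    (hB : ∀ w, ∑ p ∈ G.neighborFinset w, (G.degree p : ℝ) ≤ B) : μ ^ 2 ≤ B := by
  obtain ⟨u, hu⟩ := Function.ne_iff.mp hx
  have : Nonempty V := ⟨u⟩
  obtain ⟨w, hw⟩ := Finite.exists_max fun v => |x v|
  have hxw : 0 < |x w| := (abs_pos.mpr hu).trans_le (hw u)
  have hμ2 : G.adjMatrix ℝ *ᵥ (G.adjMatrix ℝ *ᵥ x) = μ ^ 2 • x := by
    rw [hμ, mulVec_smul, hμ, smul_smul, sq]
  refine le_of_mul_le_mul_right ?_ hxw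
  calc μ ^ 2 * |x w| = |(G.adjMatrix ℝ *ᵥ (G.adjMatrix ℝ *ᵥ x)) w| := by
        rw [hμ2, Pi.smul_apply, smul_eq_mul, abs_mul, abs_of_nonneg (sq_nonneg μ)]
    _ ≤ (∑ p ∈ G.neighborFinset w, (G.degree p : ℝ)) * |x w| :=
        abs_adjMatrix_mulVec_adjMatrix_mulVec_apply_le hw w
    _ ≤ B * |x w| := mul_le_mul_of_nonneg_right (hB w) hxw.le

end SimpleGraph

/-- **Hong's inequality.** If `G` has `n` vertices, `m` edges, and minimum degree at
least `1`, then `λ(G) ≤ sqrt(2m - n + 1)`. -/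
theorem hong_inequality {V : Type*} [Fintype V] [DecidableEq V]
    (G : SimpleGraph V) [DecidableRel G.Adj] (hδ : ∀ v, 1 ≤ G.degree v) :
    specRad G ≤
      Real.sqrt (2 * (G.edgeFinset.card : ℝ) - (Fintype.card V : ℝ) + 1) := by
  refine Real.iSup_le (fun i => Real.abs_le_sqrt ?_) (Real.sqrt_nonneg _)
  have hx : (adjHerm G).eigenvectorBasis i ≠ 0 :=
    (adjHerm G).eigenvectorBasis.orthonormal.ne_zero i
  exact G.sq_le_of_adjMatrix_mulVec_eq_smul (by simpa using hx)
    ((adjHerm G).mulVec_eigenvectorBasis i) (G.sum_degree_neighborFinset_le hδ)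
end
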